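/- For every computably enumerable set A and every constant c, the class of oracles {X ∈ 2^ℕ | ∀n, K^X(A↾n) ≤ K(n) + c} is a Π^0_2 class. -/

import Mathlib

/-! Enumerate `U`, `A` and the axioms of `W` in stages. Then `K^X(A↾n) ≤ K(n) + c` holds for
every `n` iff for every `U`-description `δ` of `0ⁿ` and every stage `t'`, either the stage-`t'`
approximation of `A↾n` later changes, or `X` extends the oracle use of a `W`-axiom sending a
program of length at most `|δ| + c` to that approximation. As `A` is c.e., a wrong approximation
is eventually seen to change, so both alternatives are `Σ⁰₁` in `X`. -/

open scoped Classical ENNReal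

namespace KCE

/-- Binary strings. -/
abbrev Str := List Bool

/-- The first `n` bits of (the characteristic sequence of) a set `A ⊆ ℕ`. -/
noncomputable def seg (A : Set ℕ) (n : ℕ) : Str :=
  (List.range n).map fun i => decide (i ∈ A)

/-- A set of strings is prefix-free if no element is a proper prefix of another. -/
def PrefixFree (D : Set Str) : Prop :=
  ∀ σ ∈ D, ∀ τ ∈ D, σ <+: τ → σ = τ

/-- A prefix-free machine: a partial computable map on binary strings
with prefix-free domain. -/
def PFMachine (M : Str →. Str) : Prop :=
  Partrec M ∧ PrefixFree M.Dom

/-- The Kolmogorov complexity of `σ` with respect to machine `M`: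
the least length of an `M`-description of `σ` (`⊤` if there is none). -/
noncomputable def Kof (M : Str →. Str) (σ : Str) : ℕ∞ :=
  sInf {n : ℕ∞ | ∃ τ : Str, σ ∈ M τ ∧ (τ.length : ℕ∞) = n}

/-- `U` is an optimal prefix-free machine. -/
def OptimalPF (U : Str →. Str) : Prop :=
  PFMachine U ∧ ∀ M : Str →. Str, PFMachine M → ∃ c : ℕ, ∀ σ, Kof U σ ≤ Kof M σ + (c : ℕ∞)

/-- `K(n)`: the complexity of the string of `n` zeros. -/
noncomputable def KNum (U : Str →. Str) (n : ℕ) : ℕ∞ :=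
  Kof U (List.replicate n false)

/-- `A` is `K`-trivial (w.r.t. the universal machine `U`). -/
def KTrivial (U : Str →. Str) (A : Set ℕ) : Prop :=
  ∃ c : ℕ, ∀ n, Kof U (seg A n) ≤ KNum U n + (c : ℕ∞)

/-- `X ≤_K Y`: the initial segment complexity of `X` is bounded by that of `Y`. -/
def KLe (U : Str →. Str) (X Y : Set ℕ) : Prop :=
  ∃ c : ℕ, ∀ n, Kof U (seg X n) ≤ Kof U (seg Y n) + (c : ℕ∞)

/-- A set is computably enumerable if it is the domain of a partial computable
function. -/
def CE {α : Type} [Primcodable α] (S : Set α) : Prop :=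
  ∃ f : α →. Unit, Partrec f ∧ ∀ a, a ∈ S ↔ (f a).Dom

/-- `A` is `Δ⁰₂`: it has a computable approximation. -/
def Delta02 (A : Set ℕ) : Prop :=
  ∃ g : ℕ → ℕ → Bool, Computable₂ g ∧ ∀ n, ∃ s₀, ∀ s ≥ s₀, (g n s = true ↔ n ∈ A)

/-- `ρ` is an initial segment of (the characteristic sequence of) `X`. -/
def Agrees (X : Set ℕ) (ρ : Str) : Prop :=
  ρ = seg X ρ.length

/-- An oracle machine is given by a c.e. set of axioms
`(oracle prefix, program, output)`.  `OracleDescribes W X τ σ` says that on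
oracle `X` the machine outputs `σ` on program `τ`. -/
def OracleDescribes (W : Set (Str × Str × Str)) (X : Set ℕ) (τ σ : Str) : Prop :=
  ∃ ρ : Str, Agrees X ρ ∧ (ρ, τ, σ) ∈ W

/-- An oracle prefix-free machine: the axiom set is c.e., for every oracle the
domain is prefix-free, and the computed map is single-valued. -/
def OraclePFMachine (W : Set (Str × Str × Str)) : Prop :=
  CE W ∧
  (∀ X : Set ℕ, PrefixFree {τ | ∃ σ, OracleDescribes W X τ σ}) ∧
  (∀ (X : Set ℕ) (τ σ₁ σ₂ : Str),
      OracleDescribes W X τ σ₁ → OracleDescribes W X τ σ₂ → σ₁ = σ₂)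

/-- `K^X(σ)` with respect to the oracle machine `W`. -/
noncomputable def KofO (W : Set (Str × Str × Str)) (X : Set ℕ) (σ : Str) : ℕ∞ :=
  sInf {n : ℕ∞ | ∃ τ : Str, OracleDescribes W X τ σ ∧ (τ.length : ℕ∞) = n}

/-- `W` is an optimal oracle prefix-free machine. -/
def OptimalOraclePF (W : Set (Str × Str × Str)) : Prop :=
  OraclePFMachine W ∧
  ∀ W' : Set (Str × Str × Str), OraclePFMachine W' →
    ∃ c : ℕ, ∀ (X : Set ℕ) (σ : Str), KofO W X σ ≤ KofO W' X σ + (c : ℕ∞)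

/-- `X ≤_LK Y`: oracle `Y` compresses at least as well as oracle `X`. -/
def LKLe (W : Set (Str × Str × Str)) (X Y : Set ℕ) : Prop :=
  ∃ c : ℕ, ∀ σ : Str, KofO W Y σ ≤ KofO W X σ + (c : ℕ∞)

/-- `X ≤_LK ∅`: `X` is low for `K`. -/
def LowForK (U : Str →. Str) (W : Set (Str × Str × Str)) (X : Set ℕ) : Prop :=
  ∃ c : ℕ, ∀ σ : Str, Kof U σ ≤ KofO W X σ + (c : ℕ∞)

/-- A `Π⁰₂` class of reals. -/
def Pi02Class (P : Set (Set ℕ)) : Prop :=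
  ∃ R : Str → ℕ → Bool, Computable₂ R ∧ P = {X : Set ℕ | ∀ n, ∃ m, R (seg X m) n = true}

/-- A `Π⁰₁` class of reals. -/
def Pi01Class (P : Set (Set ℕ)) : Prop :=
  ∃ R : Str → Bool, Computable R ∧ P = {X : Set ℕ | ∀ n, R (seg X n) = true}

/-- A class of reals is perfect if it is nonempty and has no isolated points
(in the Cantor space topology). -/
def PerfectClass (P : Set (Set ℕ)) : Prop :=
  P.Nonempty ∧ ∀ X ∈ P, ∀ n : ℕ, ∃ Y ∈ P, Y ≠ X ∧ seg Y n = seg X n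

/-- The basic cylinder determined by a string. -/
def cyl (ρ : Str) : Set (Set ℕ) := {X : Set ℕ | Agrees X ρ}

/-- The weight of a set of strings: `∑ 2^{-|ρ|}`. -/
noncomputable def wgt (S : Set Str) : ℝ≥0∞ :=
  ∑' ρ : S, ((2 : ℝ≥0∞)⁻¹) ^ (ρ : Str).length

/-- A class of reals is null (w.r.t. the uniform measure on Cantor space). -/
def NullClass (P : Set (Set ℕ)) : Prop :=
  ∀ k : ℕ, ∃ S : Set Str, (P ⊆ ⋃ ρ ∈ S, cyl ρ) ∧ wgt S ≤ ((2 : ℝ≥0∞)⁻¹) ^ k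

/-- `X` is weakly 2-random: it belongs to no null `Π⁰₂` class. -/
def Weakly2Random (X : Set ℕ) : Prop :=
  ∀ P : Set (Set ℕ), Pi02Class P → NullClass P → X ∉ P

/-- The halting problem `∅'`. -/
def halting : Set ℕ :=
  {n | ((Denumerable.ofNat Nat.Partrec.Code n).eval n).Dom}

/-- `X` is truth-table reducible to `∅'`: `X = Φ^{∅'}` for a Turing functional
`Φ` (given by a c.e., consistent set of axioms) that is total on every oracle. -/
def TTBelowHalting (X : Set ℕ) : Prop :=
  ∃ V : Set (Str × ℕ × Bool), CE V ∧
    (∀ (Y : Set ℕ) (n : ℕ), ∃ ρ b, Agrees Y ρ ∧ (ρ, n, b) ∈ V) ∧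
    (∀ (Y : Set ℕ) (n : ℕ) (b₁ b₂ : Bool),
        (∃ ρ, Agrees Y ρ ∧ (ρ, n, b₁) ∈ V) → (∃ ρ, Agrees Y ρ ∧ (ρ, n, b₂) ∈ V) → b₁ = b₂) ∧
    (∀ n, n ∈ X ↔ ∃ ρ, Agrees halting ρ ∧ (ρ, n, true) ∈ V)

/-- `g` is computable in the oracle `O`: some oracle Turing functional, given by
a c.e. set of axioms, computes exactly `g` along `O`. -/
def ComputableIn (O : Set ℕ) (g : ℕ → Bool) : Prop :=
  ∃ V : Set (Str × ℕ × Bool), CE V ∧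
    ∀ (n : ℕ) (b : Bool), ((∃ ρ, Agrees O ρ ∧ (ρ, n, b) ∈ V) ↔ g n = b)

/-- A family `F` of subsets of `ℕ` is uniformly computable in `∅'`. -/
def UnifHaltingComputable (F : Set (Set ℕ)) : Prop :=
  ∃ f : ℕ → ℕ → Bool,
    ComputableIn halting (fun m => f m.unpair.1 m.unpair.2) ∧
    F = {S : Set ℕ | ∃ i : ℕ, S = {n : ℕ | f i n = true}}

/-- `V` is an optimal plain (not necessarily prefix-free) machine. -/
def OptimalPlain (V : Str →. Str) : Prop :=
  Partrec V ∧ ∀ M : Str →. Str, Partrec M → ∃ c : ℕ, ∀ σ, Kof V σ ≤ Kof M σ + (c : ℕ∞)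

/-- `X` is `C`-trivial (w.r.t. the optimal plain machine `V`). -/
def CTrivial (V : Str →. Str) (X : Set ℕ) : Prop :=
  ∃ c : ℕ, ∀ n, Kof V (seg X n) ≤ Kof V (List.replicate n false) + (c : ℕ∞)

/-- `X ≤_C Y` (w.r.t. the optimal plain machine `V`). -/
def CLe (V : Str →. Str) (X Y : Set ℕ) : Prop :=
  ∃ c : ℕ, ∀ n, Kof V (seg X n) ≤ Kof V (seg Y n) + (c : ℕ∞)

section StageApprox

open Nat.Partrec Encodable

variable {α β : Type} [Primcodable α] [Primcodable β]

structure IsStageApprox (f : α →. β) (g : ℕ → α → Option β) : Prop where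
  primrec : Primrec₂ g
  mem_iff : ∀ {a b}, b ∈ f a ↔ ∃ t, g t a = some b
  mono : ∀ {t t' a b}, t ≤ t' → g t a = some b → g t' a = some b

structure IsStageEnum (S : Set α) (g : ℕ → α → Bool) : Prop where
  primrec : Primrec₂ g
  mem_iff : ∀ {a}, a ∈ S ↔ ∃ t, g t a = true
  mono : ∀ {t t' a}, t ≤ t' → g t a = true → g t' a = true

theorem _root_.Partrec.exists_isStageApprox {f : α →. β} (hf : Partrec f) :
    ∃ g, IsStageApprox f g := by
  obtain ⟨c, hc⟩ := Code.exists_code.1 hf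
  have hmem : ∀ a y, y ∈ c.eval (encode a) ↔ ∃ b ∈ f a, encode b = y := by
    intro a y
    simp [hc, encodek]
  refine ⟨fun t a => (c.evaln t (encode a)).bind decode, ⟨?_, fun {a b} => ⟨?_, ?_⟩, ?_⟩⟩
  · exact Primrec.option_bind
      (Code.primrec_evaln.comp
        ((Primrec.fst.pair (Primrec.const c)).pair (Primrec.encode.comp Primrec.snd)))
      (Primrec.decode.comp Primrec.snd).to₂
  · intro hb
    obtain ⟨t, ht⟩ := Code.evaln_complete.1 ((hmem a _).2 ⟨b, hb, rfl⟩)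
    exact ⟨t, by simp [Option.mem_def.1 ht, encodek]⟩
  · rintro ⟨t, ht⟩
    obtain ⟨y, hy, hyb⟩ := Option.bind_eq_some_iff.1 ht
    obtain ⟨b', hb', rfl⟩ := (hmem a y).1 (Code.evaln_sound hy)
    rw [encodek, Option.some_inj] at hyb
    exact hyb ▸ hb'
  · intro t t' a b htt' h
    obtain ⟨y, hy, hyb⟩ := Option.bind_eq_some_iff.1 h
    exact Option.bind_eq_some_iff.2 ⟨y, Code.evaln_mono htt' hy, hyb⟩

theorem CE.exists_isStageEnum {S : Set α} (hS : CE S) : ∃ g, IsStageEnum S g := by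
  obtain ⟨f, hf, hfS⟩ := hS
  obtain ⟨g, hg⟩ := hf.exists_isStageApprox
  refine ⟨fun t a => (g t a).isSome, Primrec.option_isSome.comp₂ hg.primrec,
    fun {a} => ?_, fun {t t' a} htt' h => ?_⟩
  · simp only [hfS, Part.dom_iff_mem, hg.mem_iff, Option.isSome_iff_exists]
    exact exists_comm
  · obtain ⟨b, hb⟩ := Option.isSome_iff_exists.1 h
    simp [hg.mono htt' hb]

end StageApprox

section Segments

open Filter

lemma seg_length (X : Set ℕ) (m : ℕ) : (seg X m).length = m := by
  simp [seg]

lemma seg_take (X : Set ℕ) (k m : ℕ) : (seg X m).take k = seg X (min k m) := by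
  simp only [seg, ← List.map_take, List.take_range]

lemma agrees_seg (X : Set ℕ) (m : ℕ) : Agrees X (seg X m) :=
  (congrArg (seg X) (seg_length X m)).symm

def approxSeg (g : ℕ → ℕ → Bool) (t n : ℕ) : Str :=
  (List.range n).map (g t)

lemma primrec_approxSeg {g : ℕ → ℕ → Bool} (hg : Primrec₂ g) : Primrec₂ (approxSeg g) :=
  Primrec.list_map (Primrec.list_range.comp Primrec.snd)
    (hg.comp (Primrec.fst.comp Primrec.fst) Primrec.snd).to₂

theorem IsStageEnum.eventually_approxSeg_eq {S : Set ℕ} {g : ℕ → ℕ → Bool}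
    (hg : IsStageEnum S g) (n : ℕ) : ∀ᶠ t in atTop, approxSeg g t n = seg S n := by
  have hbit : ∀ i, ∀ᶠ t in atTop, g t i = decide (i ∈ S) := by
    intro i
    by_cases hi : i ∈ S
    · obtain ⟨t₀, ht₀⟩ := hg.mem_iff.1 hi
      filter_upwards [eventually_ge_atTop t₀] with t ht
      simpa [hi] using hg.mono ht ht₀
    · exact Eventually.of_forall fun t => by
        simpa [hi] using fun h => hi (hg.mem_iff.2 ⟨t, h⟩)
  filter_upwards [(eventually_all_finset (Finset.range n)).2 fun i _ => hbit i] with t ht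
  exact List.map_congr_left fun i hi => ht i (by simpa using hi)

end Segments

section Pi02

open Encodable

theorem pi02Class_setOf_forall_exists {α β : Type} [Primcodable α] [Primcodable β]
    {P : Str → α → β → Prop} (hP : ComputablePred fun x : Str × α × β => P x.1 x.2.1 x.2.2) :
    Pi02Class {X | ∀ a, ∃ m b, P (seg X m) a b} := by
  -- `m` codes both the length of the oracle segment used and the witness `b`
  refine ⟨fun s n => (decode (α := α) n).casesOn true fun a =>
    (decode (α := ℕ × β) s.length).casesOn false fun p => decide (P (s.take p.1) a p.2), ?_, ?_⟩
  · have hP' : Computable₂ fun (x : (Str × ℕ) × α) (p : ℕ × β) =>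
        decide (P (x.1.1.take p.1) x.2 p.2) :=
      (hP.decide.comp
        ((Primrec.list_take.to_comp.comp (Computable.fst.comp Computable.snd)
          (Computable.fst.comp (Computable.fst.comp Computable.fst))).pair
        ((Computable.snd.comp Computable.fst).pair (Computable.snd.comp Computable.snd)))).to₂
    exact (Computable.option_casesOn (Computable.decode.comp Computable.snd)
      (Computable.const true)
      (Computable.option_casesOn
        (Computable.decode.comp
          (Computable.list_length.comp (Computable.fst.comp Computable.fst)))
        (Computable.const false) hP').to₂).to₂
  · ext X
    constructor
    · intro h n
      cases hn : decode (α := α) n with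
      | none => exact ⟨0, by simp [hn]⟩
      | some a =>
        obtain ⟨m, b, hb⟩ := h a
        refine ⟨encode (m, b), ?_⟩
        simpa [hn, seg_length, encodek, seg_take, Nat.left_le_pair] using hb
    · intro h a
      obtain ⟨m, hm⟩ := h (encode a)
      simp only [encodek, seg_length] at hm
      cases hd : decode (α := ℕ × β) m with
      | none => simp [hd] at hm
      | some p =>
        simp only [hd, seg_take, decide_eq_true_eq] at hm
        exact ⟨_, _, hm⟩

end Pi02

section BoundedComplexity

open Filter

lemma sInf_length_le_coe_iff {P : Str → Prop} {N : ℕ} :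
    sInf {k : ℕ∞ | ∃ τ : Str, P τ ∧ (τ.length : ℕ∞) = k} ≤ N ↔ ∃ τ, P τ ∧ τ.length ≤ N := by
  constructor
  · intro h
    have hne : {k : ℕ∞ | ∃ τ : Str, P τ ∧ (τ.length : ℕ∞) = k}.Nonempty := by
      by_contra hempty
      rw [Set.not_nonempty_iff_eq_empty.1 hempty, sInf_empty] at h
      exact ENat.natCast_ne_top N (top_le_iff.1 h)
    obtain ⟨τ, hτ, hτN⟩ := csInf_mem hne
    exact ⟨τ, hτ, by exact_mod_cast hτN.symm ▸ h⟩
  · rintro ⟨τ, hτ, hτN⟩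
    exact (sInf_le (by exact ⟨τ, hτ, rfl⟩)).trans (by exact_mod_cast hτN)

lemma Kof_le_coe_iff {M : Str →. Str} {σ : Str} {N : ℕ} :
    Kof M σ ≤ N ↔ ∃ τ, σ ∈ M τ ∧ τ.length ≤ N :=
  sInf_length_le_coe_iff

lemma KofO_le_coe_iff {W : Set (Str × Str × Str)} {X : Set ℕ} {σ : Str} {N : ℕ} :
    KofO W X σ ≤ N ↔ ∃ τ, OracleDescribes W X τ σ ∧ τ.length ≤ N :=
  sInf_length_le_coe_iff

/- `δ` is a candidate `U`-description of `0ⁿ`, genuine if found by stage `t`, and `t'` a guess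
at a stage by which `A↾n` has settled. The witness `(τ, u)` is a stage refuting that guess or a
short program whose `W`-axiom with use `s` is enumerated by stage `u`. -/
def BoundedComplexityTest (gU : ℕ → Str → Option Str) (gA : ℕ → ℕ → Bool)
    (gW : ℕ → Str × Str × Str → Bool) (c : ℕ) (s : Str) : ℕ × Str × ℕ × ℕ → Str × ℕ → Prop
  | (n, δ, t, t'), (τ, u) =>
    gU t δ ≠ some (List.replicate n false) ∨
      (t' ≤ u ∧ approxSeg gA u n ≠ approxSeg gA t' n) ∨
      (gW u (s, τ, approxSeg gA t' n) = true ∧ τ.length ≤ δ.length + c)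

variable {U : Str →. Str} {W : Set (Str × Str × Str)} {A : Set ℕ}
  {gU : ℕ → Str → Option Str} {gA : ℕ → ℕ → Bool} {gW : ℕ → Str × Str × Str → Bool} {c : ℕ}

lemma primrecPred_boundedComplexityTest (hgU : Primrec₂ gU) (hgA : Primrec₂ gA)
    (hgW : Primrec₂ gW) :
    PrimrecPred fun x : Str × (ℕ × Str × ℕ × ℕ) × (Str × ℕ) =>
      BoundedComplexityTest gU gA gW c x.1 x.2.1 x.2.2 := by
  have hs : Primrec fun x : Str × (ℕ × Str × ℕ × ℕ) × (Str × ℕ) => x.1 := Primrec.fst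
  have hn : Primrec fun x : Str × (ℕ × Str × ℕ × ℕ) × (Str × ℕ) => x.2.1.1 :=
    Primrec.fst.comp (Primrec.fst.comp Primrec.snd)
  have hδ : Primrec fun x : Str × (ℕ × Str × ℕ × ℕ) × (Str × ℕ) => x.2.1.2.1 :=
    Primrec.fst.comp (Primrec.snd.comp (Primrec.fst.comp Primrec.snd))
  have ht : Primrec fun x : Str × (ℕ × Str × ℕ × ℕ) × (Str × ℕ) => x.2.1.2.2.1 :=
    Primrec.fst.comp (Primrec.snd.comp (Primrec.snd.comp (Primrec.fst.comp Primrec.snd)))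
  have ht' : Primrec fun x : Str × (ℕ × Str × ℕ × ℕ) × (Str × ℕ) => x.2.1.2.2.2 :=
    Primrec.snd.comp (Primrec.snd.comp (Primrec.snd.comp (Primrec.fst.comp Primrec.snd)))
  have hτ : Primrec fun x : Str × (ℕ × Str × ℕ × ℕ) × (Str × ℕ) => x.2.2.1 :=
    Primrec.fst.comp (Primrec.snd.comp Primrec.snd)
  have hu : Primrec fun x : Str × (ℕ × Str × ℕ × ℕ) × (Str × ℕ) => x.2.2.2 :=
    Primrec.snd.comp (Primrec.snd.comp Primrec.snd)
  have hzeros : Primrec fun n => List.replicate n false :=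
    (Primrec.list_map Primrec.list_range (Primrec.const false).to₂).of_eq fun n => by simp
  have happrox := primrec_approxSeg hgA
  refine PrimrecPred.or (PrimrecPred.not (Primrec.eq.comp (hgU.comp ht hδ)
      (Primrec.option_some.comp (hzeros.comp hn))))
    (PrimrecPred.or (PrimrecPred.and (Primrec.nat_le.comp ht' hu)
      (PrimrecPred.not (Primrec.eq.comp (happrox.comp hu hn) (happrox.comp ht' hn))))
    (PrimrecPred.and (Primrec.eq.comp
      (hgW.comp hu (hs.pair (hτ.pair (happrox.comp ht' hn)))) (Primrec.const true))
      (Primrec.nat_le.comp (Primrec.list_length.comp hτ)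
        (Primrec.nat_add.comp (Primrec.list_length.comp hδ) (Primrec.const c)))))

lemma forall_exists_boundedComplexityTest_of_le (hgU : IsStageApprox U gU)
    (hgA : IsStageEnum A gA) (hgW : IsStageEnum W gW) {X : Set ℕ}
    (hX : ∀ n, KofO W X (seg A n) ≤ KNum U n + c) (q : ℕ × Str × ℕ × ℕ) :
    ∃ m w, BoundedComplexityTest gU gA gW c (seg X m) q w := by
  obtain ⟨n, δ, t, t'⟩ := q
  by_cases hδ : gU t δ = some (List.replicate n false)
  swap
  · exact ⟨0, ([], 0), Or.inl hδ⟩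
  by_cases hchange : ∃ u, t' ≤ u ∧ approxSeg gA u n ≠ approxSeg gA t' n
  · obtain ⟨u, hu⟩ := hchange
    exact ⟨0, ([], u), Or.inr (Or.inl hu)⟩
  push Not at hchange
  have hsettled : approxSeg gA t' n = seg A n := by
    obtain ⟨u, hu, hu'⟩ :=
      ((hgA.eventually_approxSeg_eq n).and (eventually_ge_atTop t')).exists
    rw [← hchange u hu', hu]
  have hK : KofO W X (seg A n) ≤ ((δ.length + c : ℕ) : ℕ∞) := by
    refine (hX n).trans ?_
    push_cast
    gcongr
    exact Kof_le_coe_iff.2 ⟨δ, hgU.mem_iff.2 ⟨t, hδ⟩, le_rfl⟩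
  obtain ⟨τ, ⟨ρ, hρ, hmem⟩, hτ⟩ := KofO_le_coe_iff.1 hK
  obtain ⟨u, hu⟩ := hgW.mem_iff.1 hmem
  refine ⟨ρ.length, (τ, u), Or.inr (Or.inr ⟨?_, hτ⟩)⟩
  rwa [← hρ, hsettled]

lemma le_of_forall_exists_boundedComplexityTest (hgU : IsStageApprox U gU)
    (hgA : IsStageEnum A gA) (hgW : IsStageEnum W gW) {X : Set ℕ}
    (hX : ∀ q, ∃ m w, BoundedComplexityTest gU gA gW c (seg X m) q w) (n : ℕ) :
    KofO W X (seg A n) ≤ KNum U n + c := by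
  by_cases htop : KNum U n = ⊤
  · simp [htop]
  obtain ⟨k, hk⟩ := ENat.ne_top_iff_exists.1 htop
  obtain ⟨δ, hδ, hδk⟩ := Kof_le_coe_iff.1 hk.ge
  obtain ⟨t, ht⟩ := hgU.mem_iff.1 hδ
  obtain ⟨T, hT⟩ := eventually_atTop.1 (hgA.eventually_approxSeg_eq n)
  obtain ⟨m, ⟨τ, u⟩, hfake | ⟨hTu, hrefuted⟩ | ⟨hW, hτ⟩⟩ := hX (n, δ, t, T)
  · exact absurd ht hfake
  · exact absurd ((hT u hTu).trans (hT T le_rfl).symm) hrefuted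
  · rw [hT T le_rfl] at hW
    have hdesc : OracleDescribes W X τ (seg A n) :=
      ⟨seg X m, agrees_seg X m, hgW.mem_iff.2 ⟨u, hW⟩⟩
    calc KofO W X (seg A n) ≤ ((k + c : ℕ) : ℕ∞) :=
          KofO_le_coe_iff.2 ⟨τ, hdesc, by omega⟩
      _ = KNum U n + c := by rw [← hk, Nat.cast_add]

end BoundedComplexity

/-- For every c.e. set `A` and constant `c`, the class
`{X | ∀ n, K^X(A↾n) ≤ K(n) + c}` is a `Π⁰₂` class. -/
theorem pi02Class_bounded_oracle_complexity
    (U : Str →. Str) (hU : OptimalPF U)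
    (W : Set (Str × Str × Str)) (hW : OptimalOraclePF W)
    (A : Set ℕ) (hA : CE A) (c : ℕ) :
    Pi02Class {X : Set ℕ | ∀ n : ℕ, KofO W X (seg A n) ≤ KNum U n + (c : ℕ∞)} := by
  obtain ⟨gU, hgU⟩ := hU.1.1.exists_isStageApprox
  obtain ⟨gA, hgA⟩ := hA.exists_isStageEnum
  obtain ⟨gW, hgW⟩ := hW.1.1.exists_isStageEnum
  have hclass : {X : Set ℕ | ∀ n : ℕ, KofO W X (seg A n) ≤ KNum U n + (c : ℕ∞)} =
      {X | ∀ q, ∃ m w, BoundedComplexityTest gU gA gW c (seg X m) q w} :=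
    Set.ext fun X => ⟨forall_exists_boundedComplexityTest_of_le hgU hgA hgW,
      le_of_forall_exists_boundedComplexityTest hgU hgA hgW⟩
  rw [hclass]
  exact pi02Class_setOf_forall_exists
    (primrecPred_boundedComplexityTest hgU.primrec hgA.primrec hgW.primrec).computablePred

end KCE
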